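/- For every θ with 0 < θ < 1, the proportion of Boolean functions of n variables with complexity at most 2^{θn} tends to 0; that is, (card {f : (Fin n → ZMod 2) → ZMod 2 | C_n(f) ≤ 2^{θn}}) / 2^{2^n} → 0 as n → ∞. In particular, for all sufficiently large n there exists a Boolean function f of n variables with C_n(f) > 2^{θn}. -/

import Mathlib

/-- Expressions for Boolean functions of `n` variables, built from the constants
0 and 1 and the coordinate projections using addition and multiplication. -/
inductive BExpr (n : ℕ) : Type where
  | zero : BExpr n
  | one : BExpr n
  | proj (j : Fin n) : BExpr n
  | add (a b : BExpr n) : BExpr n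
  | mul (a b : BExpr n) : BExpr n

/-- Pointwise evaluation of a Boolean expression. -/
def BExpr.eval {n : ℕ} : BExpr n → (Fin n → ZMod 2) → ZMod 2
  | .zero, _ => 0
  | .one, _ => 1
  | .proj j, x => x j
  | .add a b, x => a.eval x + b.eval x
  | .mul a b, x => a.eval x * b.eval x

/-- The cost of a Boolean expression: the total number of occurrences of the
projections (constants cost 0, each projection costs 1). -/
def BExpr.cost {n : ℕ} : BExpr n → ℕ
  | .zero => 0
  | .one => 0
  | .proj _ => 1
  | .add a b => a.cost + b.cost
  | .mul a b => a.cost + b.cost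

/-- The complexity of a Boolean function: the least total number of occurrences
of projections in an expression representing it. -/
noncomputable def bcplx (n : ℕ) (f : (Fin n → ZMod 2) → ZMod 2) : ℕ :=
  sInf {k | ∃ e : BExpr n, e.eval = f ∧ e.cost = k}

namespace Shannon
variable {n : ℕ}

def constE (n : ℕ) (c : ZMod 2) : BExpr n := if c = 1 then .one else .zero

lemma eval_constE (c : ZMod 2) (x : Fin n → ZMod 2) : (constE n c).eval x = c := by
  have : c = 0 ∨ c = 1 := by revert c; decide
  rcases this with h | h <;> subst h <;> simp [constE, BExpr.eval]

def lit (j : Fin n) (c : ZMod 2) : BExpr n := if c = 1 then .proj j else .add .one (.proj j)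

lemma eval_lit (j : Fin n) (c : ZMod 2) (x : Fin n → ZMod 2) :
    (lit j c).eval x = if x j = c then 1 else 0 := by
  have hc : c = 0 ∨ c = 1 := by revert c; decide
  have hx : x j = 0 ∨ x j = 1 := by generalize x j = t; revert t; decide
  rcases hc with h | h <;> subst h <;> rcases hx with h2 | h2 <;>
    simp [lit, BExpr.eval, h2] <;> decide

def listProd : List (BExpr n) → BExpr n := List.foldr .mul .one
def listSum : List (BExpr n) → BExpr n := List.foldr .add .zero

lemma eval_listProd (l : List (BExpr n)) (x : Fin n → ZMod 2) :
    (listProd l).eval x = (l.map (fun e => e.eval x)).prod := by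
  induction l with
  | nil => simp [listProd, BExpr.eval]
  | cons a l ih =>
      show a.eval x * (listProd l).eval x = _
      rw [List.map_cons, List.prod_cons, ih]

lemma eval_listSum (l : List (BExpr n)) (x : Fin n → ZMod 2) :
    (listSum l).eval x = (l.map (fun e => e.eval x)).sum := by
  induction l with
  | nil => simp [listSum, BExpr.eval]
  | cons a l ih =>
      show a.eval x + (listSum l).eval x = _
      rw [List.map_cons, List.sum_cons, ih]

def point (a : Fin n → ZMod 2) : BExpr n :=
  listProd ((List.finRange n).map (fun j => lit j (a j)))

lemma eval_point (a x : Fin n → ZMod 2) :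
    (point a).eval x = if x = a then 1 else 0 := by
  rw [point, eval_listProd, List.map_map]
  have : ((List.finRange n).map ((fun e => BExpr.eval e x) ∘ fun j => lit j (a j))).prod
      = ∏ j : Fin n, if x j = a j then (1 : ZMod 2) else 0 := by
    rw [Fin.prod_univ_def]
    simp [Function.comp_def, eval_lit]
  rw [this, Fintype.prod_boole]
  congr 1
  simp [funext_iff]

noncomputable def rep (f : (Fin n → ZMod 2) → ZMod 2) : BExpr n :=
  listSum ((Finset.univ : Finset (Fin n → ZMod 2)).toList.map
    (fun a => .mul (constE n (f a)) (point a)))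

lemma eval_rep (f : (Fin n → ZMod 2) → ZMod 2) : (rep f).eval = f := by
  funext x
  rw [rep, eval_listSum, List.map_map]
  have : ((Finset.univ : Finset (Fin n → ZMod 2)).toList.map
      ((fun e => BExpr.eval e x) ∘ fun a => .mul (constE n (f a)) (point a))).sum
      = ∑ a : Fin n → ZMod 2, f a * (if x = a then 1 else 0) := by
    rw [← Finset.sum_map_toList]
    simp [Function.comp_def, BExpr.eval, eval_constE, eval_point]
  rw [this]
  simp [mul_ite]

lemma bcplx_le_iff (f : (Fin n → ZMod 2) → ZMod 2) (k : ℕ) :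
    bcplx n f ≤ k ↔ ∃ e : BExpr n, e.eval = f ∧ e.cost ≤ k := by
  constructor
  · intro h
    have hne : {m | ∃ e : BExpr n, e.eval = f ∧ e.cost = m}.Nonempty :=
      ⟨(rep f).cost, rep f, eval_rep f, rfl⟩
    obtain ⟨e, he, hc⟩ := Nat.sInf_mem hne
    exact ⟨e, he, hc ▸ h⟩
  · rintro ⟨e, he, hc⟩
    exact le_trans (Nat.sInf_le ⟨e, he, rfl⟩) hc

end Shannon

namespace Shannon
variable {n : ℕ}

mutual
inductive RedR : {n : ℕ} → BExpr n → Prop where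
  | proj {n : ℕ} (j : Fin n) : RedR (.proj j)
  | add {n : ℕ} {a b : BExpr n} : RedR a → RedR b → RedR (.add a b)
  | mul {n : ℕ} {a b : BExpr n} : RedS a → RedS b → RedR (.mul a b)

inductive RedS : {n : ℕ} → BExpr n → Prop where
  | ofR {n : ℕ} {a : BExpr n} : RedR a → RedS a
  | addOne {n : ℕ} {a : BExpr n} : RedR a → RedS (.add .one a)
end

lemma zmod2_cases (c : ZMod 2) : c = 0 ∨ c = 1 := by revert c; decide

lemma red_cost (e : BExpr n) : (RedR e → 1 ≤ e.cost) ∧ (RedS e → 1 ≤ e.cost) := by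
  induction e with
  | zero =>
    constructor
    · intro h; cases h
    · intro h; cases h with | ofR h => cases h
  | one =>
    constructor
    · intro h; cases h
    · intro h; cases h with | ofR h => cases h
  | proj j => exact ⟨fun _ => le_refl _, fun _ => le_refl _⟩
  | add a b iha ihb =>
    constructor
    · intro h
      cases h with | add ha hb =>
        show 1 ≤ a.cost + b.cost
        have := iha.1 ha; omega
    · intro h
      cases h with
      | ofR h =>
        cases h with | add ha hb =>
          show 1 ≤ a.cost + b.cost
          have := iha.1 ha; omega
      | addOne h =>
        show 1 ≤ BExpr.cost .one + b.cost
        have := ihb.1 h; omega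
  | mul a b iha ihb =>
    constructor
    · intro h
      cases h with | mul ha hb =>
        show 1 ≤ a.cost + b.cost
        have := iha.2 ha; omega
    · intro h
      cases h with
      | ofR h =>
        cases h with | mul ha hb =>
          show 1 ≤ a.cost + b.cost
          have := iha.2 ha; omega

/-- attach a constant to a reduced expression, giving an S-form -/
lemma toS (c : ZMod 2) (r : BExpr n) (h : RedR r) :
    ∃ s : BExpr n, RedS s ∧ s.cost = r.cost ∧ ∀ x, s.eval x = c + r.eval x := by
  have hc : c = 0 ∨ c = 1 := by revert c; decide
  rcases hc with rfl | rfl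
  · exact ⟨r, .ofR h, rfl, fun x => by rw [zero_add]⟩
  · exact ⟨.add .one r, .addOne h, by simp [BExpr.cost], fun x => rfl⟩

/-- normal form: every expression is a constant plus (possibly) a reduced expression -/
lemma nf (e : BExpr n) :
    (∃ c : ZMod 2, ∀ x, e.eval x = c) ∨
    (∃ (c : ZMod 2) (r : BExpr n), RedR r ∧ r.cost ≤ e.cost ∧
      ∀ x, e.eval x = c + r.eval x) := by
  induction e with
  | zero => exact .inl ⟨0, fun _ => rfl⟩
  | one => exact .inl ⟨1, fun _ => rfl⟩
  | proj j => exact .inr ⟨0, .proj j, .proj j, le_refl _, fun x => (zero_add _).symm⟩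
  | add a b iha ihb =>
    rcases iha with ⟨ca, hca⟩ | ⟨ca, ra, hra, hcra, hea⟩ <;>
      rcases ihb with ⟨cb, hcb⟩ | ⟨cb, rb, hrb, hcrb, heb⟩
    · exact .inl ⟨ca + cb, fun x => by show a.eval x + b.eval x = _; rw [hca, hcb]⟩
    · refine .inr ⟨ca + cb, rb, hrb, le_trans hcrb (by show _ ≤ a.cost + b.cost; omega),
        fun x => ?_⟩
      show a.eval x + b.eval x = _
      rw [hca, heb x]; ring
    · refine .inr ⟨ca + cb, ra, hra, le_trans hcra (by show _ ≤ a.cost + b.cost; omega),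
        fun x => ?_⟩
      show a.eval x + b.eval x = _
      rw [hcb, hea x]; ring
    · refine .inr ⟨ca + cb, .add ra rb, .add hra hrb,
        by show ra.cost + rb.cost ≤ a.cost + b.cost; omega, fun x => ?_⟩
      show a.eval x + b.eval x = _ + (ra.eval x + rb.eval x)
      rw [hea x, heb x]; ring
  | mul a b iha ihb =>
    rcases iha with ⟨ca, hca⟩ | ⟨ca, ra, hra, hcra, hea⟩ <;>
      rcases ihb with ⟨cb, hcb⟩ | ⟨cb, rb, hrb, hcrb, heb⟩
    · exact .inl ⟨ca * cb, fun x => by show a.eval x * b.eval x = _; rw [hca, hcb]⟩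
    · -- constant times nonconstant
      have hc := zmod2_cases ca
      rcases hc with rfl | rfl
      · exact .inl ⟨0, fun x => by show a.eval x * b.eval x = _; rw [hca]; ring⟩
      · refine .inr ⟨cb, rb, hrb, le_trans hcrb (by show _ ≤ a.cost + b.cost; omega),
          fun x => ?_⟩
        show a.eval x * b.eval x = _
        rw [hca, heb x]; ring
    · have hc := zmod2_cases cb
      rcases hc with rfl | rfl
      · exact .inl ⟨0, fun x => by show a.eval x * b.eval x = _; rw [hcb]; ring⟩
      · refine .inr ⟨ca, ra, hra, le_trans hcra (by show _ ≤ a.cost + b.cost; omega),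
          fun x => ?_⟩
        show a.eval x * b.eval x = _
        rw [hcb, hea x]; ring
    · obtain ⟨sa, hsa, hsca, hsea⟩ := toS ca ra hra
      obtain ⟨sb, hsb, hscb, hseb⟩ := toS cb rb hrb
      refine .inr ⟨0, .mul sa sb, .mul hsa hsb,
        by show sa.cost + sb.cost ≤ a.cost + b.cost; omega, fun x => ?_⟩
      show a.eval x * b.eval x = 0 + (sa.eval x * sb.eval x)
      rw [hea x, heb x, hsea x, hseb x, zero_add]

end Shannon

namespace Shannon
variable {n : ℕ}

open Classical in
noncomputable def Rset (n k : ℕ) : Finset ((Fin n → ZMod 2) → ZMod 2) :=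
  Finset.univ.filter (fun f => ∃ r : BExpr n, RedR r ∧ r.cost ≤ k ∧ r.eval = f)

open Classical in
noncomputable def Sset (n k : ℕ) : Finset ((Fin n → ZMod 2) → ZMod 2) :=
  Finset.univ.filter (fun f => ∃ s : BExpr n, RedS s ∧ s.cost ≤ k ∧ s.eval = f)

open Classical in
noncomputable def Fset (n k : ℕ) : Finset ((Fin n → ZMod 2) → ZMod 2) :=
  Finset.univ.filter (fun f => ∃ e : BExpr n, e.eval = f ∧ e.cost ≤ k)

lemma mem_Rset {k : ℕ} {f : (Fin n → ZMod 2) → ZMod 2} :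
    f ∈ Rset n k ↔ ∃ r : BExpr n, RedR r ∧ r.cost ≤ k ∧ r.eval = f := by
  simp [Rset]

lemma mem_Sset {k : ℕ} {f : (Fin n → ZMod 2) → ZMod 2} :
    f ∈ Sset n k ↔ ∃ s : BExpr n, RedS s ∧ s.cost ≤ k ∧ s.eval = f := by
  simp [Sset]

lemma mem_Fset {k : ℕ} {f : (Fin n → ZMod 2) → ZMod 2} :
    f ∈ Fset n k ↔ ∃ e : BExpr n, e.eval = f ∧ e.cost ≤ k := by
  simp [Fset]

lemma Sset_card_le (k : ℕ) : (Sset n k).card ≤ 2 * (Rset n k).card := by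
  have hsub : Sset n k ⊆ Rset n k ∪ (Rset n k).image (fun g => 1 + g) := by
    intro f hf
    obtain ⟨s, hs, hc, he⟩ := mem_Sset.mp hf
    cases hs with
    | ofR h =>
      exact Finset.mem_union_left _ (mem_Rset.mpr ⟨s, h, hc, he⟩)
    | addOne h =>
      rename_i r
      refine Finset.mem_union_right _ (Finset.mem_image.mpr ⟨r.eval, ?_, ?_⟩)
      · refine mem_Rset.mpr ⟨r, h, ?_, rfl⟩
        calc r.cost ≤ BExpr.cost .one + r.cost := by omega
        _ ≤ k := hc
      · funext x
        rw [← he]; rfl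
  calc (Sset n k).card ≤ (Rset n k ∪ (Rset n k).image (fun g => 1 + g)).card :=
        Finset.card_le_card hsub
    _ ≤ (Rset n k).card + ((Rset n k).image (fun g => 1 + g)).card := Finset.card_union_le _ _
    _ ≤ (Rset n k).card + (Rset n k).card := by
        have := Finset.card_image_le (s := Rset n k) (f := fun g => 1 + g)
        omega
    _ = 2 * (Rset n k).card := by ring

lemma Rset_zero : (Rset n 0).card = 0 := by
  rw [Finset.card_eq_zero]
  ext f
  simp only [mem_Rset, Finset.notMem_empty, iff_false]
  rintro ⟨r, hr, hc, -⟩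
  have := (red_cost r).1 hr
  omega

lemma Rset_structure (k : ℕ) :
    Rset n k ⊆ (Finset.univ.image (fun j : Fin n => (fun x : Fin n → ZMod 2 => x j))) ∪
      (Finset.Icc 1 (k-1)).biUnion (fun i =>
        Finset.image₂ (· + ·) (Rset n i) (Rset n (k-i)) ∪
        Finset.image₂ (· * ·) (Sset n i) (Sset n (k-i))) := by
  intro f hf
  obtain ⟨r, hr, hc, he⟩ := mem_Rset.mp hf
  cases hr with
  | proj j =>
    refine Finset.mem_union_left _ (Finset.mem_image.mpr ⟨j, Finset.mem_univ _, ?_⟩)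
    rw [← he]; rfl
  | add ha hb =>
    rename_i a b
    have h1 := (red_cost a).1 ha
    have h2 := (red_cost b).1 hb
    have hcc : a.cost + b.cost ≤ k := hc
    refine Finset.mem_union_right _ (Finset.mem_biUnion.mpr ⟨a.cost, ?_, ?_⟩)
    · rw [Finset.mem_Icc]; omega
    refine Finset.mem_union_left _ (Finset.mem_image₂.mpr
      ⟨a.eval, mem_Rset.mpr ⟨a, ha, le_refl _, rfl⟩,
       b.eval, mem_Rset.mpr ⟨b, hb, by omega, rfl⟩, ?_⟩)
    rw [← he]; rfl
  | mul ha hb =>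
    rename_i a b
    have h1 := (red_cost a).2 ha
    have h2 := (red_cost b).2 hb
    have hcc : a.cost + b.cost ≤ k := hc
    refine Finset.mem_union_right _ (Finset.mem_biUnion.mpr ⟨a.cost, ?_, ?_⟩)
    · rw [Finset.mem_Icc]; omega
    refine Finset.mem_union_right _ (Finset.mem_image₂.mpr
      ⟨a.eval, mem_Sset.mpr ⟨a, ha, le_refl _, rfl⟩,
       b.eval, mem_Sset.mpr ⟨b, hb, by omega, rfl⟩, ?_⟩)
    rw [← he]; rfl

lemma rho_rec (k : ℕ) :
    (Rset n k).card ≤ n + ∑ i ∈ Finset.Icc 1 (k-1),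
      5 * ((Rset n i).card * (Rset n (k-i)).card) := by
  calc (Rset n k).card ≤ _ := Finset.card_le_card (Rset_structure k)
    _ ≤ (Finset.univ.image (fun j : Fin n => (fun x : Fin n → ZMod 2 => x j))).card +
        ((Finset.Icc 1 (k-1)).biUnion _).card := Finset.card_union_le _ _
    _ ≤ n + ∑ i ∈ Finset.Icc 1 (k-1),
        5 * ((Rset n i).card * (Rset n (k-i)).card) := by
      gcongr
      · calc _ ≤ (Finset.univ : Finset (Fin n)).card := Finset.card_image_le
          _ = n := by simp
      · calc _ ≤ ∑ i ∈ Finset.Icc 1 (k-1),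
            (Finset.image₂ (· + ·) (Rset n i) (Rset n (k-i)) ∪
             Finset.image₂ (· * ·) (Sset n i) (Sset n (k-i))).card :=
            Finset.card_biUnion_le
          _ ≤ _ := by
            apply Finset.sum_le_sum
            intro i _
            calc _ ≤ (Finset.image₂ (· + ·) (Rset n i) (Rset n (k-i))).card +
                (Finset.image₂ (· * ·) (Sset n i) (Sset n (k-i))).card :=
                Finset.card_union_le _ _
              _ ≤ (Rset n i).card * (Rset n (k-i)).card +
                  (Sset n i).card * (Sset n (k-i)).card := by
                  gcongr <;> exact Finset.card_image₂_le _ _ _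
              _ ≤ (Rset n i).card * (Rset n (k-i)).card +
                  (2 * (Rset n i).card) * (2 * (Rset n (k-i)).card) := by
                  gcongr <;> exact Sset_card_le _
              _ ≤ 5 * ((Rset n i).card * (Rset n (k-i)).card) := by ring_nf; omega

lemma rho_le (K : ℕ) : ∀ k ≤ K, (Rset n k).card ≤ (n + 5*K + 2)^(2*k - 1) := by
  intro k
  induction k using Nat.strong_induction_on with
  | _ k ih =>
    intro hk
    set B := n + 5*K + 2 with hB
    have hB1 : 1 ≤ B := by omega
    match k with
    | 0 => simp [Rset_zero]
    | (k+1) =>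
      calc (Rset n (k+1)).card ≤ n + ∑ i ∈ Finset.Icc 1 k,
            5 * ((Rset n i).card * (Rset n (k+1-i)).card) := by
            have := rho_rec (n := n) (k+1); simpa using this
        _ ≤ n + ∑ i ∈ Finset.Icc 1 k, 5 * B^(2*(k+1) - 2) := by
            gcongr with i hi
            rw [Finset.mem_Icc] at hi
            calc (Rset n i).card * (Rset n (k+1-i)).card
                ≤ B^(2*i-1) * B^(2*(k+1-i)-1) := by
                  gcongr
                  · exact ih i (by omega) (by omega)
                  · exact ih (k+1-i) (by omega) (by omega)
              _ = B^(2*(k+1) - 2) := by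
                  rw [← pow_add]
                  congr 1
                  omega
        _ = n + k * (5 * B^(2*(k+1)-2)) := by
            rw [Finset.sum_const, Nat.card_Icc]
            simp [Nat.smul_one_eq_cast]
        _ ≤ B * B^(2*(k+1)-2) := by
            have h1 : n ≤ n * B^(2*(k+1)-2) := Nat.le_mul_of_pos_right _ (Nat.pow_pos hB1)
            have h2 : n + 5*k ≤ B := by omega
            calc n + k * (5*B^(2*(k+1)-2)) = n + (5*k) * B^(2*(k+1)-2) := by ring
              _ ≤ n * B^(2*(k+1)-2) + (5*k) * B^(2*(k+1)-2) := Nat.add_le_add_right h1 _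
              _ = (n + 5*k) * B^(2*(k+1)-2) := by ring
              _ ≤ B * B^(2*(k+1)-2) := Nat.mul_le_mul_right _ h2
        _ = B^(2*(k+1)-1) := by
            rw [← pow_succ']
            congr 1 <;> omega

lemma Fset_card_le (k : ℕ) :
    (Fset n k).card ≤ 2 + 2 * (Rset n k).card := by
  classical
  have hsub : Fset n k ⊆ insert (0 : (Fin n → ZMod 2) → ZMod 2) (insert 1
      (Rset n k ∪ (Rset n k).image (fun g => 1 + g))) := by
    intro f hf
    obtain ⟨e, he, hc⟩ := mem_Fset.mp hf
    rcases nf e with ⟨c, hcc⟩ | ⟨c, r, hr, hrc, hre⟩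
    · rcases zmod2_cases c with rfl | rfl
      · have : f = 0 := by funext x; rw [← he]; exact hcc x
        rw [this]; exact Finset.mem_insert_self _ _
      · have : f = 1 := by funext x; rw [← he]; exact hcc x
        rw [this]
        exact Finset.mem_insert_of_mem (Finset.mem_insert_self _ _)
    · rcases zmod2_cases c with rfl | rfl
      · have : f = r.eval := by funext x; rw [← he, hre x, zero_add]
        rw [this]
        exact Finset.mem_insert_of_mem (Finset.mem_insert_of_mem
          (Finset.mem_union_left _ (mem_Rset.mpr ⟨r, hr, hrc.trans hc, rfl⟩)))
      · have : f = 1 + r.eval := by funext x; rw [← he, hre x]; rfl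
        rw [this]
        refine Finset.mem_insert_of_mem (Finset.mem_insert_of_mem
          (Finset.mem_union_right _ (Finset.mem_image.mpr ⟨r.eval, mem_Rset.mpr ⟨r, hr, hrc.trans hc, rfl⟩, rfl⟩)))
  calc (Fset n k).card ≤ _ := Finset.card_le_card hsub
    _ ≤ 1 + (insert (1 : (Fin n → ZMod 2) → ZMod 2)
        (Rset n k ∪ (Rset n k).image (fun g => 1 + g))).card := Finset.card_insert_le _ _ |>.trans (by omega)
    _ ≤ 2 + (Rset n k ∪ (Rset n k).image (fun g => 1 + g)).card := by
        have := Finset.card_insert_le (1 : (Fin n → ZMod 2) → ZMod 2)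
          (Rset n k ∪ (Rset n k).image (fun g => 1 + g))
        omega
    _ ≤ 2 + 2 * (Rset n k).card := by
        have h1 := Finset.card_union_le (Rset n k) ((Rset n k).image (fun g => 1 + g))
        have h2 := Finset.card_image_le (s := Rset n k) (f := fun g => (1 : (Fin n → ZMod 2) → ZMod 2) + g)
        omega

theorem countBound (n m : ℕ) : (Fset n m).card ≤ 4 * (n + 5*m + 2)^(2*m) := by
  have h1 := Fset_card_le (n := n) m
  have h2 := rho_le (n := n) m m (le_refl _)
  have hB1 : 1 ≤ n + 5*m + 2 := by omega
  have h3 : (n + 5*m + 2)^(2*m - 1) ≤ (n + 5*m + 2)^(2*m) :=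
    Nat.pow_le_pow_right hB1 (by omega)
  have h4 : 1 ≤ (n + 5*m + 2)^(2*m) := Nat.one_le_pow _ _ (by omega)
  omega

end Shannon

namespace Shannon

lemma card_subtype_le (n : ℕ) (x : ℝ) :
    Nat.card {f : (Fin n → ZMod 2) → ZMod 2 // (bcplx n f : ℝ) ≤ x} ≤ (Fset n ⌊x⌋₊).card := by
  classical
  rw [Nat.card_eq_fintype_card, Fintype.card_subtype]
  apply Finset.card_le_card
  intro f hf
  rw [Finset.mem_filter] at hf
  have : bcplx n f ≤ ⌊x⌋₊ := Nat.le_floor hf.2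
  exact mem_Fset.mpr ((bcplx_le_iff f _).mp this)

end Shannon

open Shannon Filter Real in
theorem stmt15 (θ : ℝ) (hθ0 : 0 < θ) (hθ1 : θ < 1) :
    Filter.Tendsto (fun n : ℕ =>
      (Nat.card {f : (Fin n → ZMod 2) → ZMod 2 //
          (bcplx n f : ℝ) ≤ (2 : ℝ) ^ (θ * n)} : ℝ) / 2 ^ (2 ^ n))
      Filter.atTop (nhds 0) ∧
    ∀ᶠ n : ℕ in Filter.atTop, ∃ f : (Fin n → ZMod 2) → ZMod 2,
      (2 : ℝ) ^ (θ * n) < (bcplx n f : ℝ) := by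
  set a : ℕ → ℕ := fun n =>
    Nat.card {f : (Fin n → ZMod 2) → ZMod 2 // (bcplx n f : ℝ) ≤ (2 : ℝ) ^ (θ * n)} with ha
  set m : ℕ → ℕ := fun n => ⌊(2 : ℝ) ^ (θ * n)⌋₊ with hm
  -- basic bounds
  have hm_le : ∀ n, (m n : ℝ) ≤ (2 : ℝ) ^ (θ * n) := fun n => Nat.floor_le (by positivity)
  have ha_le : ∀ n, (a n : ℝ) ≤ 4 * ((n + 5 * m n + 2 : ℕ) : ℝ) ^ (2 * m n) := by
    intro n
    have h1 := card_subtype_le n ((2 : ℝ) ^ (θ * n))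
    have h2 := countBound n (m n)
    have : a n ≤ 4 * (n + 5 * m n + 2) ^ (2 * m n) := le_trans h1 h2
    calc (a n : ℝ) ≤ ((4 * (n + 5 * m n + 2) ^ (2 * m n) : ℕ) : ℝ) := by exact_mod_cast this
      _ = 4 * ((n + 5 * m n + 2 : ℕ) : ℝ) ^ (2 * m n) := by push_cast; ring
  -- eventually n ≤ 2^(θn) (real)
  set c : ℝ := (2 : ℝ) ^ (θ - 1) with hc
  have hc0 : 0 < c := rpow_pos_of_pos two_pos _
  have hc1 : c < 1 := rpow_lt_one_of_one_lt_of_neg one_lt_two (by linarith)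
  have hcn : ∀ n : ℕ, c ^ n = (2 : ℝ) ^ ((θ - 1) * n) := by
    intro n
    rw [← rpow_natCast c n, hc, ← rpow_mul (by norm_num)]
  have h2n : ∀ n : ℕ, ((2 : ℝ) ^ (n : ℝ)) = (2 : ℝ) ^ (n : ℕ) := fun n => rpow_natCast 2 n
  have hsplit : ∀ n : ℕ, (2 : ℝ) ^ (θ * n) = c ^ n * 2 ^ (n : ℕ) := by
    intro n
    rw [hcn, ← h2n, ← rpow_add two_pos]
    congr 1
    ring
  -- the limit sequence h → 0
  have hhalf : (0:ℝ) ≤ 1/2 ∧ (1:ℝ)/2 < 1 := by norm_num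
  have hH : Tendsto (fun n : ℕ => (2 + (n:ℝ)) * (1/2) ^ n + (2*θ*(n:ℝ) + 6) * c ^ n)
      atTop (nhds 0) := by
    have t1 : Tendsto (fun n : ℕ => (2:ℝ) * (1/2) ^ n) atTop (nhds 0) := by
      simpa using (tendsto_pow_atTop_nhds_zero_of_lt_one hhalf.1 hhalf.2).const_mul (2:ℝ)
    have t2 : Tendsto (fun n : ℕ => (n:ℝ) * (1/2) ^ n) atTop (nhds 0) := by
      simpa using tendsto_pow_const_mul_const_pow_of_lt_one 1 hhalf.1 hhalf.2
    have t3 : Tendsto (fun n : ℕ => (2*θ) * ((n:ℝ) * c ^ n)) atTop (nhds 0) := by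
      simpa using ((tendsto_pow_const_mul_const_pow_of_lt_one 1 hc0.le hc1).const_mul (2*θ))
    have t4 : Tendsto (fun n : ℕ => (6:ℝ) * c ^ n) atTop (nhds 0) := by
      simpa using (tendsto_pow_atTop_nhds_zero_of_lt_one hc0.le hc1).const_mul (6:ℝ)
    have := ((t1.add t2).add (t3.add t4))
    simpa only [add_zero] using this.congr (fun n => by ring)
  -- eventual key inequality : g n ≤ 2^n where g n = 2 + n + (θ n + 3) * (2 * m n)
  have hkey : ∀ᶠ n : ℕ in atTop,
      2 + (n:ℝ) + (θ * n + 3) * (2 * m n) ≤ (2:ℝ) ^ (n : ℕ) := by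
    have hev1 : ∀ᶠ n : ℕ in atTop,
        (2 + (n:ℝ)) * (1/2) ^ n + (2*θ*(n:ℝ) + 6) * c ^ n ≤ 1 :=
      hH.eventually_le_const one_pos
    filter_upwards [hev1] with n hn
    have hp2 : (0:ℝ) < 2 ^ (n:ℕ) := by positivity
    have hmn : (θ * n + 3) * (2 * m n) ≤ (2*θ*n + 6) * (2:ℝ) ^ (θ * n) := by
      have h3 : (0:ℝ) ≤ θ * n + 3 := by positivity
      calc (θ * n + 3) * (2 * m n) ≤ (θ * n + 3) * (2 * (2:ℝ) ^ (θ * n)) := by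
            have := hm_le n
            gcongr
        _ = (2*θ*n + 6) * (2:ℝ) ^ (θ * n) := by ring
    have : 2 + (n:ℝ) + (θ * n + 3) * (2 * m n)
        ≤ ((2 + (n:ℝ)) * (1/2) ^ n + (2*θ*(n:ℝ) + 6) * c ^ n) * 2 ^ (n:ℕ) := by
      have e1 : ((2 + (n:ℝ)) * (1/2) ^ n) * 2 ^ (n:ℕ) = 2 + (n:ℝ) := by
        rw [one_div, inv_pow]
        field_simp
      have e2 : ((2*θ*(n:ℝ) + 6) * c ^ n) * 2 ^ (n:ℕ) = (2*θ*n + 6) * (2:ℝ) ^ (θ * n) := by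
        rw [mul_assoc, ← hsplit]
      calc 2 + (n:ℝ) + (θ * n + 3) * (2 * m n)
          ≤ 2 + (n:ℝ) + (2*θ*n + 6) * (2:ℝ) ^ (θ * n) := by linarith
        _ = ((2 + (n:ℝ)) * (1/2) ^ n) * 2 ^ (n:ℕ)
            + ((2*θ*(n:ℝ) + 6) * c ^ n) * 2 ^ (n:ℕ) := by rw [e1, e2]
        _ = ((2 + (n:ℝ)) * (1/2) ^ n + (2*θ*(n:ℝ) + 6) * c ^ n) * 2 ^ (n:ℕ) := by ring
    calc 2 + (n:ℝ) + (θ * n + 3) * (2 * m n)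
        ≤ ((2 + (n:ℝ)) * (1/2) ^ n + (2*θ*(n:ℝ) + 6) * c ^ n) * 2 ^ (n:ℕ) := this
      _ ≤ 1 * 2 ^ (n:ℕ) := by gcongr
      _ = 2 ^ (n:ℕ) := one_mul _
  -- eventually B n ≤ 2^(θ n + 3)
  have hBev : ∀ᶠ n : ℕ in atTop, ((n + 5 * m n + 2 : ℕ) : ℝ) ≤ (2:ℝ) ^ (θ * n + 3) := by
    set d : ℝ := (2 : ℝ) ^ (-θ) with hd
    have hd0 : 0 < d := rpow_pos_of_pos two_pos _
    have hd1 : d < 1 := rpow_lt_one_of_one_lt_of_neg one_lt_two (by linarith)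
    have hdn : ∀ n : ℕ, d ^ n = (2 : ℝ) ^ (-(θ * n)) := by
      intro n
      rw [← rpow_natCast d n, hd, ← rpow_mul (by norm_num)]
      ring_nf
    have hev2 : ∀ᶠ n : ℕ in atTop, (n:ℝ) * d ^ n ≤ 1 :=
      (by simpa using tendsto_pow_const_mul_const_pow_of_lt_one 1 hd0.le hd1 :
        Tendsto (fun n : ℕ => (n:ℝ) * d ^ n) atTop (nhds 0)).eventually_le_const one_pos
    filter_upwards [hev2] with n hn2
    have hθn : (1:ℝ) ≤ (2:ℝ) ^ (θ * n) := by
      calc (1:ℝ) = (2:ℝ) ^ (0:ℝ) := (rpow_zero 2).symm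
        _ ≤ (2:ℝ) ^ (θ * n) := rpow_le_rpow_of_exponent_le one_le_two (by positivity)
    have hdninv : d ^ n * (2:ℝ) ^ (θ * n) = 1 := by
      rw [hdn, ← rpow_add two_pos]
      simp
    have hn_le : (n:ℝ) ≤ (2:ℝ) ^ (θ * n) := by
      have hp : (0:ℝ) < (2:ℝ) ^ (θ * n) := rpow_pos_of_pos two_pos _
      calc (n:ℝ) = (n:ℝ) * (d ^ n * (2:ℝ) ^ (θ * n)) := by rw [hdninv, mul_one]
        _ = ((n:ℝ) * d ^ n) * (2:ℝ) ^ (θ * n) := by ring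
        _ ≤ 1 * (2:ℝ) ^ (θ * n) := by gcongr
        _ = (2:ℝ) ^ (θ * n) := one_mul _
    have hrw : (2:ℝ) ^ (θ * n + 3) = 8 * (2:ℝ) ^ (θ * n) := by
      rw [rpow_add two_pos]
      have : (2:ℝ) ^ (3:ℝ) = 8 := by
        rw [show (3:ℝ) = ((3:ℕ):ℝ) by norm_num, rpow_natCast]
        norm_num
      rw [this]
      ring
    rw [hrw]
    push_cast
    have := hm_le n
    linarith
  -- final eventual bound
  have hfinal : ∀ᶠ n : ℕ in atTop, (a n : ℝ) * 2 ^ (n:ℕ) ≤ 2 ^ (2 ^ n : ℕ) := by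
    filter_upwards [hBev, hkey] with n hB hk
    have hp2 : (0:ℝ) < 2 ^ (n:ℕ) := by positivity
    have h4 : (4:ℝ) = (2:ℝ) ^ (2:ℝ) := by
      rw [show (2:ℝ) = ((2:ℕ):ℝ) from by norm_num, rpow_natCast]
      norm_num
    have hBpow : ((n + 5 * m n + 2 : ℕ) : ℝ) ^ (2 * m n)
        ≤ ((2:ℝ) ^ (θ * n + 3)) ^ (2 * m n) := by
      gcongr
    have hrpow : ((2:ℝ) ^ (θ * n + 3)) ^ (2 * m n) = (2:ℝ) ^ ((θ * n + 3) * (2 * m n)) := by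
      rw [← rpow_natCast ((2:ℝ) ^ (θ * n + 3)) (2 * m n), ← rpow_mul two_pos.le]
      push_cast
      ring_nf
    calc (a n : ℝ) * 2 ^ (n:ℕ)
        ≤ (4 * ((n + 5 * m n + 2 : ℕ) : ℝ) ^ (2 * m n)) * 2 ^ (n:ℕ) := by
          have := ha_le n; gcongr
      _ ≤ (4 * (2:ℝ) ^ ((θ * n + 3) * (2 * m n))) * 2 ^ (n:ℕ) := by
          rw [← hrpow]; gcongr
      _ = (2:ℝ) ^ (2 + (θ * n + 3) * (2 * m n) + (n:ℝ)) := by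
          rw [h4, ← h2n n, ← rpow_add two_pos, ← rpow_add two_pos]
      _ ≤ (2:ℝ) ^ (((2:ℕ) ^ n : ℕ) : ℝ) := by
          apply rpow_le_rpow_of_exponent_le one_le_two
          push_cast
          have h2nn : (2:ℝ) ^ (n:ℕ) ≤ (2:ℝ) ^ ((2:ℕ) ^ n) := by
            apply pow_le_pow_right₀ one_le_two
            exact Nat.lt_two_pow_self |>.le
          linarith [hk]
      _ = (2:ℝ) ^ (2 ^ n : ℕ) := by
          rw [rpow_natCast]
  -- ratio bound
  have hratio : ∀ᶠ n : ℕ in atTop,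
      (a n : ℝ) / 2 ^ (2 ^ n) ≤ (1/2) ^ n := by
    filter_upwards [hfinal] with n hn
    rw [div_le_iff₀ (by positivity)]
    calc (a n : ℝ) = ((a n : ℝ) * 2 ^ (n:ℕ)) * (1/2) ^ n := by
          rw [one_div, inv_pow]
          field_simp
      _ ≤ (2 ^ (2 ^ n : ℕ)) * (1/2) ^ n := by gcongr
      _ = (1/2) ^ n * 2 ^ 2 ^ n := by ring
  have hT : Tendsto (fun n : ℕ => (a n : ℝ) / 2 ^ (2 ^ n)) atTop (nhds 0) := by
    apply tendsto_of_tendsto_of_tendsto_of_le_of_le' tendsto_const_nhds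
      (tendsto_pow_atTop_nhds_zero_of_lt_one (by norm_num) (by norm_num :
        (1:ℝ)/2 < 1))
    · exact Eventually.of_forall fun n => by positivity
    · exact hratio
  refine ⟨hT, ?_⟩
  have hlt : ∀ᶠ n : ℕ in atTop, (a n : ℝ) / 2 ^ (2 ^ n) < 1 :=
    hT.eventually_lt_const one_pos
  filter_upwards [hlt] with n hn
  by_contra hcon
  push_neg at hcon
  have hall : ∀ f : (Fin n → ZMod 2) → ZMod 2, (bcplx n f : ℝ) ≤ (2:ℝ) ^ (θ * n) :=
    fun f => hcon f
  have hcard : a n = 2 ^ 2 ^ n := by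
    have h1 : Nat.card {f : (Fin n → ZMod 2) → ZMod 2 //
        (bcplx n f : ℝ) ≤ (2:ℝ) ^ (θ * n)} = Nat.card ((Fin n → ZMod 2) → ZMod 2) :=
      Nat.card_congr (Equiv.subtypeUnivEquiv hall)
    have h2 : Nat.card ((Fin n → ZMod 2) → ZMod 2) = 2 ^ 2 ^ n := by
      classical
      rw [Nat.card_eq_fintype_card]
      simp [Fintype.card_fun, ZMod.card]
    exact h1.trans h2
  rw [hcard] at hn
  push_cast at hn
  rw [div_self (by positivity)] at hn
  exact lt_irrefl _ hn
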